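/- Let p ≥ 2 be even and let a, b ∈ U_p with a ~ b. Then μ_p(a) = μ_p(b); that is, μ_p is an invariant of the equivalence relation ~. -/

import Mathlib

open scoped Classical

/-- Tuples over `ZMod p` of arbitrary length (`U_p` lives among these). -/
abbrev DehnTuple (p : ℕ) := Σ n : ℕ, Fin n → ZMod p

/-- (Op1): cyclic shift `(a_1,…,a_n) → (a_2,…,a_n,a_1)`. -/
def dOp1 {p n : ℕ} (hn : 0 < n) (a : Fin n → ZMod p) : Fin n → ZMod p :=
  fun i => a ⟨(i.1 + 1) % n, Nat.mod_lt _ hn⟩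

/-- (Op2): `(a_1,…,a_n) → (x, a_2+(-1)^2(a_1-x), …, a_n+(-1)^n(a_1-x))`. -/
def dOp2 {p n : ℕ} (hn : 0 < n) (x : ZMod p) (a : Fin n → ZMod p) : Fin n → ZMod p :=
  fun i => a i + (-1 : ZMod p) ^ (i.1 + 1) * (a ⟨0, hn⟩ - x)

/-- (Op3): `(a_1,…,a_n) → (x, a_1-a_2+x, …, a_1-a_n+x)`. -/
def dOp3 {p n : ℕ} (hn : 0 < n) (x : ZMod p) (a : Fin n → ZMod p) : Fin n → ZMod p :=
  fun i => a ⟨0, hn⟩ - a i + x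

/-- (Op4): `(a_1,…,a_n) → (a_1, -a_1+a_2+a_3, a_3, …, a_n)` (needs `n > 2`). -/
def dOp4 {p n : ℕ} (hn : 2 < n) (a : Fin n → ZMod p) : Fin n → ZMod p :=
  fun i => if i.1 = 1 then -a ⟨0, by omega⟩ + a ⟨1, by omega⟩ + a ⟨2, hn⟩ else a i

/-- A single transformation (Op1)–(Op4) on tuples in `U_p`
(tuples of even positive length). -/
inductive DehnStep (p : ℕ) : DehnTuple p → DehnTuple p → Prop
  | op1 {n : ℕ} (hn : 0 < n) (he : Even n) (a : Fin n → ZMod p) :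
      DehnStep p ⟨n, a⟩ ⟨n, dOp1 hn a⟩
  | op2 {n : ℕ} (hn : 0 < n) (he : Even n) (x : ZMod p) (a : Fin n → ZMod p) :
      DehnStep p ⟨n, a⟩ ⟨n, dOp2 hn x a⟩
  | op3 {n : ℕ} (hn : 0 < n) (he : Even n) (x : ZMod p) (a : Fin n → ZMod p) :
      DehnStep p ⟨n, a⟩ ⟨n, dOp3 hn x a⟩
  | op4 {n : ℕ} (hn : 2 < n) (he : Even n) (a : Fin n → ZMod p) :
      DehnStep p ⟨n, a⟩ ⟨n, dOp4 hn a⟩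

/-- `a ~ b`: related by a finite sequence of the transformations (Op1)–(Op4). -/
def DehnEquiv (p : ℕ) : DehnTuple p → DehnTuple p → Prop :=
  Relation.ReflTransGen (DehnStep p)

/-- An `R`-palette for Dehn `p`-colorings: a set of tuples closed under the
operations (i)–(iv). -/
def IsRPalette (p : ℕ) (P : Set (DehnTuple p)) : Prop :=
  (∀ {n : ℕ} (hn : 0 < n) (a : Fin n → ZMod p),
      (⟨n, a⟩ : DehnTuple p) ∈ P → (⟨n, dOp1 hn a⟩ : DehnTuple p) ∈ P) ∧
  (∀ {n : ℕ} (hn : 0 < n) (x : ZMod p) (a : Fin n → ZMod p),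
      (⟨n, a⟩ : DehnTuple p) ∈ P → (⟨n, dOp2 hn x a⟩ : DehnTuple p) ∈ P) ∧
  (∀ {n : ℕ} (hn : 0 < n) (x : ZMod p) (a : Fin n → ZMod p),
      (⟨n, a⟩ : DehnTuple p) ∈ P → (⟨n, dOp3 hn x a⟩ : DehnTuple p) ∈ P) ∧
  (∀ {n : ℕ} (hn : 2 < n) (a : Fin n → ZMod p),
      (⟨n, a⟩ : DehnTuple p) ∈ P → (⟨n, dOp4 hn a⟩ : DehnTuple p) ∈ P)

/-- The alternating set `A_p`: tuples of even positive length of the form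
`(x, y, x, y, …, x, y)`. -/
def altSet (p : ℕ) : Set (DehnTuple p) :=
  {t | 0 < t.1 ∧ Even t.1 ∧
    ∃ x y : ZMod p, ∀ i : Fin t.1, t.2 i = if Even i.1 then x else y}

/-- The cyclic consecutive sums `a_i + a_{i+1}` of integer representatives. -/
def cycS {p n : ℕ} (hn : 0 < n) (a : Fin n → ZMod p) (i : Fin n) : ℕ :=
  (a i).val + (a ⟨(i.1 + 1) % n, Nat.mod_lt _ hn⟩).val

/-- `τ_p(a)`: the largest `k ∈ {1,…,p}` dividing `p` such that all cyclic
consecutive sums are congruent mod `k`. -/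
noncomputable def tauInv (p : ℕ) {n : ℕ} (hn : 0 < n) (a : Fin n → ZMod p) : ℕ :=
  sSup {k : ℕ | 0 < k ∧ k ∣ p ∧ ∀ i j : Fin n, cycS hn a i ≡ cycS hn a j [MOD k]}

/-- `ε_p(a)`: `0` if all cyclic consecutive sums are even, `1` if all are odd,
`∞` otherwise. -/
noncomputable def epsInv (p : ℕ) {n : ℕ} (hn : 0 < n) (a : Fin n → ZMod p) : WithTop ℕ :=
  if ∀ i, Even (cycS hn a i) then 0
  else if ∀ i, Odd (cycS hn a i) then 1
  else ⊤

/-- `μ_p(a) = E(a) - O(a)`. -/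
noncomputable def muInv (p : ℕ) {n : ℕ} (hn : 0 < n) (a : Fin n → ZMod p) : ℤ :=
  ((Finset.univ.filter fun i : Fin n => Even (cycS hn a i)).card : ℤ) -
  ((Finset.univ.filter fun i : Fin n => Odd (cycS hn a i)).card : ℤ)

/-- The reduced tuple `b ∈ (Z_{p/τ})^n` with `b_{2j-1} = (a_{2j-1}-a_1)/τ`,
`b_{2j} = (a_{2j}-a_2)/τ` (differences of integer representatives). -/
noncomputable def reducedTuple (p : ℕ) {n : ℕ} (hn1 : 1 < n) (τ : ℕ) (a : Fin n → ZMod p) :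
    Fin n → ZMod (p / τ) :=
  fun i =>
    (((((a i).val : ℤ) -
        (if Even i.1 then ((a ⟨0, by omega⟩).val : ℤ) else ((a ⟨1, hn1⟩).val : ℤ))) /
      (τ : ℤ) : ℤ) : ZMod (p / τ))

/-- `μ_{p,τ}(a)`: `|μ_{p/τ}(b)|` if `τ_p(a) = τ`, and `∞` otherwise. -/
noncomputable def muTauInv (p : ℕ) {n : ℕ} (hn1 : 1 < n) (τ : ℕ) (a : Fin n → ZMod p) :
    WithTop ℤ :=
  if tauInv p (by omega) a = τ then
    ((|muInv (p / τ) (by omega) (reducedTuple p hn1 τ a)| : ℤ) : WithTop ℤ)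
  else ⊤

/-- The entry at (0-indexed) position `k` of the canonical tuple
`(0, 0, τ, -τ, 2τ, -2τ, …)`. -/
def pairPat (p τ k : ℕ) : ZMod p :=
  if Even k then ((k / 2 : ℕ) : ZMod p) * (τ : ZMod p)
  else -(((k / 2 : ℕ) : ZMod p) * (τ : ZMod p))

/-- The alternating sum `Σ_{i=1}^n (-1)^i x_i` in `ZMod p`. -/
def altSum (p n : ℕ) (x : Fin n → ZMod p) : ZMod p :=
  ∑ i : Fin n, (-1 : ZMod p) ^ (i.1 + 1) * x i

/-- `T_{R→A}(a_1,…,a_n) = (a_1+a_2, a_2+a_3, …, a_{n-1}+a_n, a_n+a_1)`. -/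
def traMap (p : ℕ) {n : ℕ} (hn : 0 < n) (a : Fin n → ZMod p) : Fin n → ZMod p :=
  fun i => a i + a ⟨(i.1 + 1) % n, Nat.mod_lt _ hn⟩

/-- `T_{A→R}(x_1,…,x_n) = (0, c_2, …, c_n)`, `c_j = Σ_{i=1}^{j-1} (-1)^{i+(j-1)} x_i`. -/
def tarMap (p n : ℕ) (x : Fin n → ZMod p) : Fin n → ZMod p :=
  fun k => ∑ i : Fin n, if i.1 < k.1 then (-1 : ZMod p) ^ (i.1 + k.1 + 1) * x i else 0

/-- A single transformation (Op1)^A–(Op3)^A on arc-color tuples. -/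
inductive AStep (p n : ℕ) : (Fin n → ZMod p) → (Fin n → ZMod p) → Prop
  | op1 (hn : 0 < n) (x : Fin n → ZMod p) :
      AStep p n x (fun i => x ⟨(i.1 + 1) % n, Nat.mod_lt _ hn⟩)
  | op2 (c : ZMod p) (x : Fin n → ZMod p) :
      AStep p n x (fun i => 2 * c - x i)
  | op3 (hn : 1 < n) (x : Fin n → ZMod p) :
      AStep p n x (fun i =>
        if i.1 = 0 then x ⟨1, hn⟩
        else if i.1 = 1 then 2 * x ⟨1, hn⟩ - x ⟨0, by omega⟩
        else x i)

/-- `x ~^A y`: related by a finite sequence of (Op1)^A–(Op3)^A. -/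
def AEquiv (p n : ℕ) : (Fin n → ZMod p) → (Fin n → ZMod p) → Prop :=
  Relation.ReflTransGen (AStep p n)

/-- `τ_p^A(x)`: the largest `k ∈ {1,…,p}` dividing `p` with all entries
congruent mod `k`. -/
noncomputable def tauA (p n : ℕ) (x : Fin n → ZMod p) : ℕ :=
  sSup {k : ℕ | 0 < k ∧ k ∣ p ∧ ∀ i j : Fin n, (x i).val ≡ (x j).val [MOD k]}

/-!
Since `p` is even, reduction modulo 2 is a ring homomorphism `ZMod p →+* ZMod 2`, and the parity
of the integer `a_i + a_{i+1}` is the image of the entry `a_i + a_{i+1}` of `traMap`. So `μ_p(a)`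
only depends on the parity vector of `traMap a` up to permutation. (Op2) and (Op3) change the
parity of every entry of `a` by the same constant, which leaves the parities of consecutive sums
unchanged; (Op1) rotates the consecutive sums, and (Op4) swaps the first two of them modulo 2.
-/

section Parity

variable {p : ℕ} (hp : 2 ∣ p) {n : ℕ} (hn : 0 < n)

theorem even_cycS_iff [NeZero p] (a : Fin n → ZMod p) (i : Fin n) :
    Even (cycS hn a i) ↔ ZMod.castHom hp (ZMod 2) (traMap p hn a i) = 0 := by
  rw [even_iff_two_dvd, ← ZMod.natCast_eq_zero_iff, ← map_natCast (ZMod.castHom hp (ZMod 2))]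
  simp [traMap, cycS, ZMod.natCast_val, ZMod.cast_id]

theorem muInv_eq_of_parity_traMap_perm [NeZero p] {a b : Fin n → ZMod p} (σ : Equiv.Perm (Fin n))
    (h : ∀ i, ZMod.castHom hp (ZMod 2) (traMap p hn b i) =
      ZMod.castHom hp (ZMod 2) (traMap p hn a (σ i))) :
    muInv p hn a = muInv p hn b := by
  have heven : ∀ i, Even (cycS hn b i) ↔ Even (cycS hn a (σ i)) := fun i => by
    rw [even_cycS_iff hp, even_cycS_iff hp, h]
  have hEven : (Finset.univ.filter fun i => Even (cycS hn b i)).card =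
      (Finset.univ.filter fun i => Even (cycS hn a i)).card :=
    Finset.card_equiv σ (by simp [heven])
  have hOdd : (Finset.univ.filter fun i => Odd (cycS hn b i)).card =
      (Finset.univ.filter fun i => Odd (cycS hn a i)).card :=
    Finset.card_equiv σ (by simp [← Nat.not_even_iff_odd, heven])
  rw [muInv, muInv, ← hEven, ← hOdd]

theorem parity_traMap_eq_of_parity_add_const {a b : Fin n → ZMod p} (c : ZMod 2)
    (h : ∀ i, ZMod.castHom hp (ZMod 2) (b i) = ZMod.castHom hp (ZMod 2) (a i) + c) (i : Fin n) :
    ZMod.castHom hp (ZMod 2) (traMap p hn b i) = ZMod.castHom hp (ZMod 2) (traMap p hn a i) := by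
  simp only [traMap, map_add, h]
  grind

theorem parity_dOp2 (x : ZMod p) (a : Fin n → ZMod p) (i : Fin n) :
    ZMod.castHom hp (ZMod 2) (dOp2 hn x a i) =
      ZMod.castHom hp (ZMod 2) (a i) + ZMod.castHom hp (ZMod 2) (a ⟨0, hn⟩ - x) := by
  simp only [dOp2, map_add, map_mul, map_pow, map_neg, map_one, ZMod.neg_eq_self_mod_two, one_pow,
    one_mul]

theorem parity_dOp3 (x : ZMod p) (a : Fin n → ZMod p) (i : Fin n) :
    ZMod.castHom hp (ZMod 2) (dOp3 hn x a i) =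
      ZMod.castHom hp (ZMod 2) (a i) + ZMod.castHom hp (ZMod 2) (a ⟨0, hn⟩ + x) := by
  simp only [dOp3, map_add, map_sub]
  grind

end Parity

theorem Fin.mk_add_one_mod_eq_add_one {k : ℕ} (j : Fin (k + 1)) :
    (⟨(j.1 + 1) % (k + 1), Nat.mod_lt _ k.succ_pos⟩ : Fin (k + 1)) = j + 1 :=
  Fin.ext (by simp [Fin.val_add])

theorem traMap_eq_add_add_one {p k : ℕ} (hn : 0 < k + 1) (a : Fin (k + 1) → ZMod p)
    (i : Fin (k + 1)) : traMap p hn a i = a i + a (i + 1) := by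
  rw [traMap, Fin.mk_add_one_mod_eq_add_one]

theorem traMap_dOp1 {p k : ℕ} (hn : 0 < k + 1) (a : Fin (k + 1) → ZMod p) (i : Fin (k + 1)) :
    traMap p hn (dOp1 hn a) i = traMap p hn a (i + 1) := by
  simp only [traMap_eq_add_add_one, dOp1, Fin.mk_add_one_mod_eq_add_one]

theorem dOp4_eq_update {p k : ℕ} (hn3 : 2 < k + 3) (a : Fin (k + 3) → ZMod p) :
    dOp4 hn3 a = Function.update a 1 (-a 0 + a 1 + a 2) := by
  have h0 : (⟨0, by omega⟩ : Fin (k + 3)) = 0 := rfl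
  have h1 : (⟨1, by omega⟩ : Fin (k + 3)) = 1 := Fin.ext (Nat.mod_eq_of_lt (by omega)).symm
  have h2 : (⟨2, hn3⟩ : Fin (k + 3)) = 2 := Fin.ext (Nat.mod_eq_of_lt hn3).symm
  funext j
  have hj : j.1 = 1 ↔ j = 1 := by rw [← h1, Fin.ext_iff]
  simp only [dOp4, h0, h1, h2, hj, Function.update_apply]

theorem parity_traMap_dOp4 {p : ℕ} (hp : 2 ∣ p) {k : ℕ} (hn3 : 2 < k + 3) (hn : 0 < k + 3)
    (a : Fin (k + 3) → ZMod p) (i : Fin (k + 3)) :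
    ZMod.castHom hp (ZMod 2) (traMap p hn (dOp4 hn3 a) i) =
      ZMod.castHom hp (ZMod 2) (traMap p hn a (Equiv.swap 0 1 i)) := by
  simp only [traMap_eq_add_add_one, dOp4_eq_update]
  have h11 : (1 : Fin (k + 3)) + 1 = 2 := Fin.ext (by simp [Fin.val_add, Nat.mod_eq_of_lt hn3])
  rcases eq_or_ne i 0 with rfl | hi0
  · simp only [Equiv.swap_apply_left, zero_add, h11, Function.update_self,
      Function.update_of_ne (zero_ne_one' (Fin (k + 3)))]
    congr 1
    ring
  rcases eq_or_ne i 1 with rfl | hi1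
  · have h21 : (2 : Fin (k + 3)) ≠ 1 := by
      simp [Fin.ext_iff, Nat.mod_eq_of_lt hn3, Nat.mod_eq_of_lt (show 1 < k + 3 by omega)]
    simp only [Equiv.swap_apply_right, zero_add, h11, Function.update_self, Function.update_of_ne h21,
      map_add, map_neg]
    grind
  · have hsucc : i + 1 ≠ 1 := by simpa using hi0
    simp only [Equiv.swap_apply_of_ne_of_ne hi0 hi1, Function.update_of_ne hi1,
      Function.update_of_ne hsucc]

-- The value `0` at length `0` is junk: (Op1)–(Op4) only relate tuples of positive length.
noncomputable def tupleMuInv (p : ℕ) (t : DehnTuple p) : ℤ :=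
  if h : 0 < t.1 then muInv p h t.2 else 0

theorem DehnStep.tupleMuInv_eq {p : ℕ} [NeZero p] (hp : 2 ∣ p) {s t : DehnTuple p}
    (hst : DehnStep p s t) : tupleMuInv p s = tupleMuInv p t := by
  cases hst with
  | op1 hn _ a =>
    obtain ⟨k, rfl⟩ := Nat.exists_eq_add_one_of_ne_zero hn.ne'
    simp only [tupleMuInv, dif_pos hn]
    exact muInv_eq_of_parity_traMap_perm hp hn (Equiv.addRight 1) fun i => by
      rw [traMap_dOp1, Equiv.coe_addRight]
  | op2 hn _ x a =>
    simp only [tupleMuInv, dif_pos hn]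
    exact muInv_eq_of_parity_traMap_perm hp hn (Equiv.refl _)
      (parity_traMap_eq_of_parity_add_const hp hn _ (parity_dOp2 hp hn x a))
  | op3 hn _ x a =>
    simp only [tupleMuInv, dif_pos hn]
    exact muInv_eq_of_parity_traMap_perm hp hn (Equiv.refl _)
      (parity_traMap_eq_of_parity_add_const hp hn _ (parity_dOp3 hp hn x a))
  | @op4 n hn3 _ a =>
    obtain ⟨k, rfl⟩ : ∃ k, n = k + 3 := ⟨n - 3, by omega⟩
    have hn : 0 < k + 3 := by omega
    simp only [tupleMuInv, dif_pos hn]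
    exact muInv_eq_of_parity_traMap_perm hp hn (Equiv.swap 0 1) (parity_traMap_dOp4 hp hn3 hn a)

theorem DehnEquiv.tupleMuInv_eq {p : ℕ} [NeZero p] (hp : 2 ∣ p) {s t : DehnTuple p}
    (hst : DehnEquiv p s t) : tupleMuInv p s = tupleMuInv p t := by
  induction hst with
  | refl => rfl
  | tail _ hstep ih => exact ih.trans (hstep.tupleMuInv_eq hp)

theorem muInv_invariant_general (p : ℕ) (hp : 2 ≤ p) (hpe : Even p) (m n : ℕ)
    (hm : 0 < m) (hn : 0 < n)
    (a : Fin m → ZMod p) (b : Fin n → ZMod p)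
    (h : DehnEquiv p ⟨m, a⟩ ⟨n, b⟩) :
    muInv p hm a = muInv p hn b := by
  have : NeZero p := ⟨by omega⟩
  simpa [tupleMuInv, hm, hn] using h.tupleMuInv_eq hpe.two_dvd

/-- for even `p`, `μ_p` is an invariant of `~`. -/
theorem muInv_invariant (p : ℕ) (hp : 2 ≤ p) (hpe : Even p) (m n : ℕ)
    (hm : 0 < m) (hme : Even m) (hn : 0 < n) (hne : Even n)
    (a : Fin m → ZMod p) (b : Fin n → ZMod p)
    (h : DehnEquiv p ⟨m, a⟩ ⟨n, b⟩) :
    muInv p hm a = muInv p hn b :=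
  muInv_invariant_general p hp hpe m n hm hn a b h
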